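/- arXiv:1807.09419 — 4 statements merged into one kernel-verified Lean document; each statement's English description precedes it below -/
import Mathlib

section
/- Every complete, separable, metrically sigma-finite dimensional metric space contains a non-empty open subset that is metrically finite dimensional. -/
/-- `Q` has metric dimension `β` on scale `s` in `Ω`: every finite unconnected family of
closed balls with centers in `Q` and radii in `(0, s)` has multiplicity at most `β`. -/
def HasMetricDim {Ω : Type*} [MetricSpace Ω] (Q : Set Ω) (β : ℕ) (s : ℝ) : Prop :=
  ∀ (m : ℕ) (x : Fin m → Ω) (r : Fin m → ℝ),
    (∀ i, x i ∈ Q) → (∀ i, 0 < r i ∧ r i < s) →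
    (∀ i j, i ≠ j → x i ∉ Metric.closedBall (x j) (r j)) →
    ∀ y : Ω, Set.ncard {i | y ∈ Metric.closedBall (x i) (r i)} ≤ β

lemma hasMetricDim_closure {Ω : Type*} [MetricSpace Ω] {Q : Set Ω} {β : ℕ} {s : ℝ}
    (hs : 0 < s) (h : HasMetricDim Q β s) : HasMetricDim (closure Q) β (s / 2) := by
  intro m x r hx hr hun y
  rcases Nat.eq_zero_or_pos m with hm | hm
  · subst hm
    have : {i : Fin 0 | y ∈ Metric.closedBall (x i) (r i)} = ∅ := Set.eq_empty_of_isEmpty _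
    rw [this, Set.ncard_empty]
    exact Nat.zero_le β
  haveI : Nonempty (Fin m) := ⟨⟨0, hm⟩⟩
  set f : Fin m × Fin m → ℝ := fun p =>
    if p.1 = p.2 then s else dist (x p.1) (x p.2) - r p.2 with hf
  have hfpos : ∀ p, 0 < f p := by
    intro p
    by_cases hp : p.1 = p.2
    · simp [hf, hp, hs]
    · have := hun p.1 p.2 hp
      rw [Metric.mem_closedBall, not_le] at this
      simp only [hf, hp, if_false]
      linarith
  set ε : ℝ := min (s / 4) ((Finset.univ.inf' Finset.univ_nonempty f) / 4) with hεdef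
  have hinfpos : 0 < Finset.univ.inf' Finset.univ_nonempty f := by
    obtain ⟨p, -, hp⟩ := Finset.exists_mem_eq_inf' Finset.univ_nonempty f
    rw [hp]; exact hfpos p
  have hε : 0 < ε := lt_min (by linarith) (by linarith)
  have hεs : ε ≤ s / 4 := min_le_left _ _
  have hkey : ∀ i j : Fin m, i ≠ j → r j + 4 * ε ≤ dist (x i) (x j) := by
    intro i j hij
    have h1 : Finset.univ.inf' Finset.univ_nonempty f ≤ f (i, j) :=
      Finset.inf'_le _ (Finset.mem_univ _)
    have h2 : ε ≤ f (i, j) / 4 :=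
      le_trans (min_le_right _ _) (by linarith)
    have : f (i, j) = dist (x i) (x j) - r j := by simp [hf, hij]
    rw [this] at h2
    linarith
  choose x' hx'Q hx'd using fun i => Metric.mem_closure_iff.1 (hx i) ε hε
  have hballs : ∀ i, y ∈ Metric.closedBall (x i) (r i) →
      y ∈ Metric.closedBall (x' i) (r i + ε) := by
    intro i hi
    rw [Metric.mem_closedBall] at hi ⊢
    have := dist_triangle y (x i) (x' i)
    have := (hx'd i).le
    linarith
  have hsub : {i : Fin m | y ∈ Metric.closedBall (x i) (r i)} ⊆
      {i : Fin m | y ∈ Metric.closedBall (x' i) (r i + ε)} :=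
    fun i hi => hballs i hi
  have := h m x' (fun i => r i + ε) hx'Q
    (fun i => ⟨by show 0 < r i + ε; linarith [(hr i).1],
      by show r i + ε < s; linarith [(hr i).2]⟩)
    (by
      intro i j hij
      rw [Metric.mem_closedBall, not_le]
      show r j + ε < dist (x' i) (x' j)
      have h1 := hkey i j hij
      have h2 := (hx'd i).le
      have h3 := (hx'd j).le
      have h4 := dist_triangle4 (x i) (x' i) (x' j) (x j)
      rw [dist_comm (x' j) (x j)] at h4
      linarith)
    y
  exact le_trans (Set.ncard_le_ncard hsub (Set.toFinite _)) this

theorem stmt8 {Ω : Type*} [MetricSpace Ω] [CompleteSpace Ω]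
    [TopologicalSpace.SeparableSpace Ω] [Nonempty Ω]
    (Q : ℕ → Set Ω) (hcover : (⋃ i, Q i) = Set.univ)
    (hfd : ∀ i, ∃ (β : ℕ) (s : ℝ), 0 < s ∧ HasMetricDim (Q i) β s) :
    ∃ U : Set Ω, IsOpen U ∧ U.Nonempty ∧ ∃ (β : ℕ) (s : ℝ), 0 < s ∧ HasMetricDim U β s := by
  have hcl : (⋃ i, closure (Q i)) = Set.univ := by
    apply Set.eq_univ_of_univ_subset
    rw [← hcover]
    exact Set.iUnion_mono fun i => subset_closure
  obtain ⟨i, hi⟩ := nonempty_interior_of_iUnion_of_closed (fun i => isClosed_closure) hcl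
  obtain ⟨β, s, hs, hdim⟩ := hfd i
  refine ⟨interior (closure (Q i)), isOpen_interior, hi, β, s / 2, by linarith, ?_⟩
  intro m x r hx hr hun yy
  exact hasMetricDim_closure hs hdim m x r (fun j => interior_subset (hx j)) hr hun yy
end

section
/- A subset Q of a metric space Ω has Nagata dimension β − 1 in Ω if and only if every unconnected family of closed balls with centers in Q has multiplicity at most β in Ω (i.e., no point of Ω belongs to more than β of the balls). -/
/-- `Q` has Nagata dimension `β - 1` in `Ω` (written here with `β + 1` points):
for every `β + 1` points of `Q` and every `a ∈ Ω` there are two distinct points among them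
with `dist (x i) (x j) ≤ max (dist a (x i)) (dist a (x j))`. -/
def HasNagataDimLE {Ω : Type*} [MetricSpace Ω] (Q : Set Ω) (β : ℕ) : Prop :=
  ∀ x : Fin (β + 1) → Ω, (∀ i, x i ∈ Q) → ∀ a : Ω,
    ∃ i j, i ≠ j ∧ dist (x i) (x j) ≤ max (dist a (x i)) (dist a (x j))

theorem stmt10 {Ω : Type*} [MetricSpace Ω] (Q : Set Ω) (β : ℕ) :
    HasNagataDimLE Q β ↔
      ∀ (ι : Type) (x : ι → Ω) (r : ι → ℝ), (∀ i, x i ∈ Q) →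
        (∀ i j, i ≠ j → x i ∉ Metric.closedBall (x j) (r j)) →
        ∀ (y : Ω) (t : Finset ι), (∀ i ∈ t, y ∈ Metric.closedBall (x i) (r i)) →
          t.card ≤ β := by
  constructor
  · intro hN ι x r hQ hunc y t hy
    by_contra hlt
    push_neg at hlt
    have hcard : β + 1 ≤ t.card := hlt
    -- get an injection from Fin (β+1) into t
    obtain ⟨s, hst, hs⟩ := Finset.exists_subset_card_eq hcard
    have : s.card = Fintype.card (Fin (β + 1)) := by simp [hs]
    obtain ⟨f, hf⟩ : ∃ f : Fin (β + 1) → ι, Function.Injective f ∧ ∀ i, f i ∈ s := by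
      have e := (Fintype.equivFinOfCardEq (by simp [hs] : Fintype.card {a // a ∈ s} = β + 1)).symm
      exact ⟨fun i => (e i).1, fun i j h => by
        have : e i = e j := Subtype.ext h
        exact e.injective this, fun i => (e i).2⟩
    obtain ⟨i, j, hij, hle⟩ := hN (fun i => x (f i)) (fun i => hQ _) y
    have hmem : ∀ k, y ∈ Metric.closedBall (x (f k)) (r (f k)) := fun k =>
      hy _ (hst (hf.2 k))
    have hri : dist y (x (f i)) ≤ r (f i) := hmem i
    have hrj : dist y (x (f j)) ≤ r (f j) := hmem j
    have hfij : f i ≠ f j := fun h => hij (hf.1 h)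
    have h1 := hunc (f i) (f j) hfij
    have h2 := hunc (f j) (f i) hfij.symm
    simp only [Metric.mem_closedBall, not_le] at h1 h2
    rcases le_max_iff.mp hle with h | h
    · exact absurd (h.trans hri) (not_le.mpr (by rwa [dist_comm] at h2))
    · exact absurd (h.trans hrj) (not_le.mpr h1)
  · intro hB x hQ a
    by_contra hno
    push_neg at hno
    have hinj : Function.Injective x := by
      intro i j h
      by_contra hij
      have := hno i j hij
      rw [h, dist_self] at this
      exact absurd ((le_max_right _ _).trans_lt this) (not_lt.mpr dist_nonneg)
    have := hB (Fin (β + 1)) x (fun i => dist a (x i)) hQ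
      (fun i j hij => by
        have h := hno i j hij
        simp only [Metric.mem_closedBall, not_le]
        exact (le_max_right _ _).trans_lt h)
      a Finset.univ
      (fun i _ => by simp [Metric.mem_closedBall])
    simp at this
end

section
/- Let Q be a subset of a metric space Ω having Nagata dimension β − 1 in Ω, let Σ be a finite sample of points in Ω with no distance ties, and let x ∈ Ω. Then the number of points x_i ∈ Σ ∩ Q for which x is among the k nearest neighbors of x_i (within the sample Σ ∪ {x}) is at most (k+1)β. -/
section

variable {Ω : Type*} [MetricSpace Ω]

theorem HasNagataDimLE.card_le_of_pairwise {Q : Set Ω} {β : ℕ} (hQ : HasNagataDimLE Q β)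
    (x : Ω) {C : Finset Ω} (hCQ : ↑C ⊆ Q)
    (hC : (C : Set Ω).Pairwise fun a b => max (dist x a) (dist x b) < dist a b) :
    C.card ≤ β := by
  by_contra! hβ
  let e : Fin (β + 1) ↪ C := (Fin.castLEEmb hβ).trans C.equivFin.symm.toEmbedding
  obtain ⟨i, j, hij, hle⟩ := hQ (fun i => e i) (fun i => hCQ (e i).2) x
  have hne : (e i : Ω) ≠ e j := fun h => hij (e.injective (Subtype.ext h))
  exact (hC (e i).2 (e j).2 hne).not_ge hle

theorem Finset.exists_subset_pairwise_far_card_le_mul [DecidableEq Ω] (x : Ω) (k : ℕ)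
    (T : Finset Ω) (hball : ∀ y ∈ T, (T.filter fun z => dist y z ≤ dist y x).card ≤ k) :
    ∃ C ⊆ T, (C : Set Ω).Pairwise (fun a b => max (dist x a) (dist x b) < dist a b) ∧
      T.card ≤ k * C.card := by
  induction T using Finset.strongInduction with
  | H T ih =>
  rcases T.eq_empty_or_nonempty with rfl | hT
  · exact ⟨∅, subset_refl _, by simp⟩
  obtain ⟨y, hyT, hymax⟩ := T.exists_max_image (dist x) hT
  set D := T.filter fun z => dist y z ≤ dist y x
  have hyD : y ∈ D := mem_filter.2 ⟨hyT, by simp⟩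
  have hDT : D ⊆ T := filter_subset _ _
  obtain ⟨C, hCT, hC, hcard⟩ := ih (T \ D) (sdiff_ssubset hDT ⟨y, hyD⟩) fun z hz =>
    (card_le_card (filter_subset_filter _ sdiff_subset)).trans (hball z (mem_sdiff.1 hz).1)
  have hfar : ∀ c ∈ C, max (dist x y) (dist x c) < dist y c := fun c hc => by
    obtain ⟨hcT, hcD⟩ := mem_sdiff.1 (hCT hc)
    have hxc : dist y x < dist y c := lt_of_not_ge fun h => hcD (mem_filter.2 ⟨hcT, h⟩)
    rw [max_eq_left (hymax c hcT), dist_comm x y]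
    exact hxc
  refine ⟨insert y C, insert_subset hyT (hCT.trans sdiff_subset), ?_, ?_⟩
  · rw [coe_insert, Set.pairwise_insert]
    refine ⟨hC, fun c hc _ => ⟨hfar c hc, ?_⟩⟩
    rw [max_comm, dist_comm c y]
    exact hfar c hc
  · have hyC : y ∉ C := fun h => (mem_sdiff.1 (hCT h)).2 hyD
    have hsplit := card_sdiff_add_card_eq_card hDT
    rw [card_insert_of_notMem hyC, mul_add_one]
    have hDk : D.card ≤ k := hball y hyT
    omega

theorem Finset.card_filter_dist_le_le_succ [DecidableEq Ω] {S : Finset Ω} {x y : Ω}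
    (hy : y ∈ S) (hties : ∀ z ∈ S, dist y z ≠ dist y x) :
    (S.filter fun z => dist y z ≤ dist y x).card ≤
      ((S.erase y).filter fun z => dist y z < dist y x).card + 1 := by
  refine (card_le_card fun z hz => ?_).trans (card_insert_le y _)
  obtain ⟨hzS, hzx⟩ := mem_filter.1 hz
  rcases eq_or_ne z y with rfl | hzy
  · exact mem_insert_self _ _
  · exact mem_insert_of_mem <|
      mem_filter.2 ⟨mem_erase.2 ⟨hzy, hzS⟩, hzx.lt_of_ne (hties z hzS)⟩

end

theorem stmt15 {Ω : Type*} [MetricSpace Ω] [DecidableEq Ω] (Q : Set Ω) (β k : ℕ)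
    (hQ : HasNagataDimLE Q β)
    (Sn : Finset Ω) (x : Ω) (hx : x ∉ Sn)
    (hties : ∀ y ∈ insert x Sn, ∀ z ∈ insert x Sn, ∀ w ∈ insert x Sn,
      dist y z = dist y w → z = w) :
    Set.ncard {xi : Ω | xi ∈ Sn ∧ xi ∈ Q ∧
        ((Sn.erase xi).filter (fun z => dist xi z < dist xi x)).card < k} ≤
      (k + 1) * β := by
  classical
  set T := Sn.filter fun y => y ∈ Q ∧
    ((Sn.erase y).filter fun z => dist y z < dist y x).card < k
  have hT : {xi : Ω | xi ∈ Sn ∧ xi ∈ Q ∧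
      ((Sn.erase xi).filter fun z => dist xi z < dist xi x).card < k} = T := by
    ext; simp [T]
  have hball : ∀ y ∈ T, (T.filter fun z => dist y z ≤ dist y x).card ≤ k := fun y hy => by
    obtain ⟨hyS, -, hyk⟩ := Finset.mem_filter.1 hy
    have hne : ∀ z ∈ Sn, dist y z ≠ dist y x := fun z hz h => hx <|
      hties y (Finset.mem_insert_of_mem hyS) z (Finset.mem_insert_of_mem hz) x
        (Finset.mem_insert_self x Sn) h ▸ hz
    calc (T.filter fun z => dist y z ≤ dist y x).card
        ≤ (Sn.filter fun z => dist y z ≤ dist y x).card :=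
          Finset.card_le_card (Finset.filter_subset_filter _ (Finset.filter_subset _ Sn))
      _ ≤ ((Sn.erase y).filter fun z => dist y z < dist y x).card + 1 :=
          Finset.card_filter_dist_le_le_succ hyS hne
      _ ≤ k := hyk
  obtain ⟨C, hCT, hC, hcard⟩ := T.exists_subset_pairwise_far_card_le_mul x k hball
  have hCQ : ↑C ⊆ Q := fun c hc => (Finset.mem_filter.1 (hCT hc)).2.1
  rw [hT, Set.ncard_coe_finset]
  calc T.card ≤ k * C.card := hcard
    _ ≤ k * β := Nat.mul_le_mul_left k (hQ.card_le_of_pairwise x hCQ hC)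
    _ ≤ (k + 1) * β := Nat.mul_le_mul_right β k.le_succ
end

section
/- Let Q ⊆ Ω have metric dimension β on scale s in Ω, let Σₙ be a finite sample in Ω, and let Σ̃ ⊆ Σₙ with |Σ̃| = m. Fix α ∈ (0,1) and let T be the set of points x_i ∈ Σₙ ∩ Q such that ε_{kNN}(x_i) < s and the fraction of points of the closed ball closedBall(x_i, ε_{kNN}(x_i)) (as a subset of the sample) that lie in Σ̃ is strictly greater than α. Then |T| ≤ β m / α. -/
lemma greedy_extract {Ω : Type*} [MetricSpace Ω] (r : Ω → ℝ) (hr : ∀ x, 0 < r x)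
    (F : Finset Ω) : ∃ S ⊆ F,
    (∀ x ∈ S, ∀ y ∈ S, x ≠ y → x ∉ Metric.closedBall y (r y)) ∧
    (∀ x ∈ F, ∃ z ∈ S, x ∈ Metric.closedBall z (r z)) := by
  classical
  induction F using Finset.strongInductionOn with
  | _ F ih =>
    rcases F.eq_empty_or_nonempty with rfl | hF
    · exact ⟨∅, Finset.Subset.refl _, by simp, by simp⟩
    · obtain ⟨y, hyF, hymax⟩ := F.exists_max_image r hF
      have hyball : y ∈ Metric.closedBall y (r y) := by
        simp [Metric.mem_closedBall, (hr y).le]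
      have hss : F.filter (fun x => x ∉ Metric.closedBall y (r y)) ⊂ F :=
        Finset.filter_ssubset.mpr ⟨y, hyF, by simp [hyball]⟩
      obtain ⟨S', hS'sub, hunc, hcov⟩ := ih _ hss
      refine ⟨insert y S', ?_, ?_, ?_⟩
      · exact Finset.insert_subset hyF (hS'sub.trans (Finset.filter_subset _ _))
      · intro a ha b hb hab
        rcases Finset.mem_insert.mp ha with rfl | haS
        · rcases Finset.mem_insert.mp hb with rfl | hbS
          · exact absurd rfl hab
          · have hbF' := hS'sub hbS
            have hb1 : b ∉ Metric.closedBall a (r a) := (Finset.mem_filter.mp hbF').2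
            have hb2 : r b ≤ r a := hymax b (Finset.filter_subset _ _ hbF')
            intro hmem
            rw [Metric.mem_closedBall] at hmem
            exact hb1 (by rw [Metric.mem_closedBall, dist_comm]; exact hmem.trans hb2)
        · rcases Finset.mem_insert.mp hb with rfl | hbS
          · exact (Finset.mem_filter.mp (hS'sub haS)).2
          · exact hunc a haS b hbS hab
      · intro a haF
        by_cases h : a ∈ Metric.closedBall y (r y)
        · exact ⟨y, Finset.mem_insert_self _ _, h⟩
        · obtain ⟨z, hz, hza⟩ := hcov a (Finset.mem_filter.mpr ⟨haF, h⟩)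
          exact ⟨z, Finset.mem_insert_of_mem hz, hza⟩



/-- The `k`-nearest-neighbor radius of `xi` with respect to the sample `Sn`. -/
noncomputable def epskNN {Ω : Type*} [MetricSpace Ω] (k : ℕ) (Sn : Finset Ω) (xi : Ω) : ℝ :=
  sInf {r : ℝ | 0 < r ∧ k + 1 ≤ (Sn.filter (fun z => dist xi z ≤ r)).card}

theorem stmt16 {Ω : Type*} [MetricSpace Ω] (Q : Set Ω) (β : ℕ) (s : ℝ) (hs : 0 < s)
    (hQ : HasMetricDim Q β s) (k m : ℕ) (Sn St : Finset Ω)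
    (hsub : St ⊆ Sn) (hm : St.card = m)
    (α : ℝ) (hα : α ∈ Set.Ioo (0 : ℝ) 1) :
    (Set.ncard {xi : Ω | xi ∈ Sn ∧ xi ∈ Q ∧ epskNN k Sn xi < s ∧
        α * ((Sn.filter (fun z => dist xi z ≤ epskNN k Sn xi)).card : ℝ) <
          ((St.filter (fun z => dist xi z ≤ epskNN k Sn xi)).card : ℝ)} : ℝ) ≤
      β * m / α := by
  classical
  obtain ⟨hα0, hα1⟩ := hα
  have hεnn : ∀ x : Ω, 0 ≤ epskNN k Sn x := fun x =>
    Real.sInf_nonneg (fun t ht => ht.1.le)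
  -- choose δ
  set D : Finset ℝ :=
    insert s (((Sn ×ˢ Sn).image fun p => dist p.1 p.2).filter fun t => 0 < t) with hD
  have hDne : D.Nonempty := ⟨s, Finset.mem_insert_self _ _⟩
  set δ : ℝ := D.min' hDne / 2 with hδdef
  have hDpos : ∀ t ∈ D, 0 < t := by
    intro t ht
    rcases Finset.mem_insert.mp ht with rfl | ht
    · exact hs
    · exact (Finset.mem_filter.mp ht).2
  have hminpos : 0 < D.min' hDne := hDpos _ (D.min'_mem hDne)
  have hδpos : 0 < δ := by rw [hδdef]; linarith
  have hδs : δ < s := by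
    have h1 : D.min' hDne ≤ s := Finset.min'_le _ _ (Finset.mem_insert_self _ _)
    rw [hδdef]; linarith
  have hδkey : ∀ x ∈ Sn, ∀ z ∈ Sn, dist x z ≤ δ → dist x z = 0 := by
    intro x hx z hz h
    by_contra hne
    have hpos : 0 < dist x z := lt_of_le_of_ne dist_nonneg (Ne.symm hne)
    have hmem : dist x z ∈ D :=
      Finset.mem_insert_of_mem (Finset.mem_filter.mpr
        ⟨Finset.mem_image.mpr ⟨(x, z), Finset.mem_product.mpr ⟨hx, hz⟩, rfl⟩, hpos⟩)
    have := Finset.min'_le D _ hmem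
    rw [hδdef] at h
    linarith
  set r : Ω → ℝ := fun x => max (epskNN k Sn x) δ with hrdef
  have hrpos : ∀ x, 0 < r x := fun x => lt_of_lt_of_le hδpos (le_max_right _ _)
  have hkey : ∀ x ∈ Sn, ∀ z ∈ Sn,
      (dist x z ≤ r x ↔ dist x z ≤ epskNN k Sn x) := by
    intro x hx z hz
    constructor
    · intro h
      rcases le_max_iff.mp h with h | h
      · exact h
      · rw [hδkey x hx z hz h]; exact hεnn x
    · exact fun h => h.trans (le_max_left _ _)
  -- T as a finset
  set Tf : Finset Ω := Sn.filter (fun xi => xi ∈ Q ∧ epskNN k Sn xi < s ∧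
      α * ((Sn.filter fun z => dist xi z ≤ epskNN k Sn xi).card : ℝ) <
        ((St.filter fun z => dist xi z ≤ epskNN k Sn xi).card : ℝ)) with hTfdef
  have hTset : {xi : Ω | xi ∈ Sn ∧ xi ∈ Q ∧ epskNN k Sn xi < s ∧
        α * ((Sn.filter (fun z => dist xi z ≤ epskNN k Sn xi)).card : ℝ) <
          ((St.filter (fun z => dist xi z ≤ epskNN k Sn xi)).card : ℝ)} = ↑Tf := by
    ext xi
    simp only [hTfdef, Finset.coe_filter, Set.mem_setOf_eq]
  rw [hTset, Set.ncard_coe_finset, le_div_iff₀ hα0]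
  have hTfSn : Tf ⊆ Sn := Finset.filter_subset _ _
  -- extract subfamily
  obtain ⟨S, hSsub, hunc, hcov⟩ := greedy_extract r hrpos Tf
  have hSmem : ∀ z ∈ S, z ∈ Sn ∧ z ∈ Q ∧ epskNN k Sn z < s ∧
      α * ((Sn.filter fun w => dist z w ≤ epskNN k Sn z).card : ℝ) <
        ((St.filter fun w => dist z w ≤ epskNN k Sn z).card : ℝ) := by
    intro z hz
    have := Finset.mem_filter.mp (hSsub hz)
    exact ⟨this.1, this.2⟩
  -- multiplicity bound
  have hmult : ∀ w : Ω, (S.filter fun z => dist z w ≤ r z).card ≤ β := by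
    intro w
    set e := S.equivFin with he
    set x : Fin S.card → Ω := fun i => ((e.symm i : S) : Ω) with hx
    have hxS : ∀ i, x i ∈ S := fun i => (e.symm i).2
    have hxinj : Function.Injective x := fun i j h => by
      have := e.symm.injective (Subtype.ext h); exact this
    have hβ := hQ S.card x (fun i => r (x i))
      (fun i => (hSmem _ (hxS i)).2.1)
      (fun i => ⟨hrpos _, max_lt (hSmem _ (hxS i)).2.2.1 hδs⟩)
      (fun i j hij => hunc (x i) (hxS i) (x j) (hxS j) (fun h => hij (hxinj h)))
      w
    have hset : {i | w ∈ Metric.closedBall (x i) (r (x i))} =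
        ↑(Finset.univ.filter fun i => w ∈ Metric.closedBall (x i) (r (x i))) := by
      ext i; simp
    rw [hset, Set.ncard_coe_finset] at hβ
    refine le_trans (le_of_eq ?_) hβ
    apply Finset.card_bij (fun z hz => e ⟨z, (Finset.mem_filter.mp hz).1⟩)
    · intro a ha
      have h1 : dist a w ≤ r a := (Finset.mem_filter.mp ha).2
      have hxa : x (e ⟨a, (Finset.mem_filter.mp ha).1⟩) = a := by
        simp [hx]
      simp only [Finset.mem_filter, Finset.mem_univ, true_and, hxa]
      rw [Metric.mem_closedBall, dist_comm]
      exact h1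
    · intro a ha b hb hab
      have := e.injective hab
      exact congrArg Subtype.val this
    · intro i hi
      refine ⟨x i, ?_, ?_⟩
      · refine Finset.mem_filter.mpr ⟨hxS i, ?_⟩
        have := (Finset.mem_filter.mp hi).2
        rw [Metric.mem_closedBall, dist_comm] at this
        exact this
      · show e ⟨x i, _⟩ = i
        have hsub2 : (⟨x i, hxS i⟩ : {a // a ∈ S}) = e.symm i := Subtype.ext rfl
        have : (⟨x i, _⟩ : {a // a ∈ S}) = e.symm i := Subtype.ext rfl
        rw [this, Equiv.apply_symm_apply]
  have hsum1 : ∑ z ∈ S, (St.filter fun w => dist z w ≤ r z).card ≤ β * St.card := by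
    calc ∑ z ∈ S, (St.filter fun w => dist z w ≤ r z).card
        = ∑ z ∈ S, ∑ w ∈ St, if dist z w ≤ r z then 1 else 0 := by
          refine Finset.sum_congr rfl fun z _ => ?_
          rw [Finset.card_filter]
      _ = ∑ w ∈ St, ∑ z ∈ S, if dist z w ≤ r z then 1 else 0 := Finset.sum_comm
      _ = ∑ w ∈ St, (S.filter fun z => dist z w ≤ r z).card := by
          refine Finset.sum_congr rfl fun w _ => ?_
          rw [Finset.card_filter]
      _ ≤ ∑ _w ∈ St, β := Finset.sum_le_sum fun w _ => hmult w
      _ = β * St.card := by rw [Finset.sum_const, smul_eq_mul, mul_comm]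
  have hcov2 : Tf.card ≤ ∑ z ∈ S, (Sn.filter fun w => dist z w ≤ r z).card := by
    calc Tf.card ≤ (S.biUnion fun z => Sn.filter fun w => dist z w ≤ r z).card := by
          apply Finset.card_le_card
          intro a ha
          obtain ⟨z, hz, hmem⟩ := hcov a ha
          rw [Metric.mem_closedBall] at hmem
          exact Finset.mem_biUnion.mpr ⟨z, hz,
            Finset.mem_filter.mpr ⟨hTfSn ha, by rw [dist_comm]; exact hmem⟩⟩
      _ ≤ ∑ z ∈ S, (Sn.filter fun w => dist z w ≤ r z).card := Finset.card_biUnion_le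
  have hfilSn : ∀ z ∈ S, (Sn.filter fun w => dist z w ≤ r z)
      = Sn.filter fun w => dist z w ≤ epskNN k Sn z := by
    intro z hz
    exact Finset.filter_congr fun w hw => hkey z (hSmem z hz).1 w hw
  have hfilSt : ∀ z ∈ S, (St.filter fun w => dist z w ≤ r z)
      = St.filter fun w => dist z w ≤ epskNN k Sn z := by
    intro z hz
    exact Finset.filter_congr fun w hw => hkey z (hSmem z hz).1 w (hsub hw)
  have hR1 : (Tf.card : ℝ) ≤ ∑ z ∈ S, ((Sn.filter fun w => dist z w ≤ epskNN k Sn z).card : ℝ) := by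
    have h1 := hcov2
    have h2 : ∑ z ∈ S, (Sn.filter fun w => dist z w ≤ r z).card
        = ∑ z ∈ S, (Sn.filter fun w => dist z w ≤ epskNN k Sn z).card :=
      Finset.sum_congr rfl fun z hz => by rw [hfilSn z hz]
    rw [h2] at h1
    exact_mod_cast h1
  have hR2 : α * ∑ z ∈ S, ((Sn.filter fun w => dist z w ≤ epskNN k Sn z).card : ℝ)
      ≤ ∑ z ∈ S, ((St.filter fun w => dist z w ≤ epskNN k Sn z).card : ℝ) := by
    rw [Finset.mul_sum]
    exact Finset.sum_le_sum fun z hz => ((hSmem z hz).2.2.2).le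
  have hR3 : ∑ z ∈ S, ((St.filter fun w => dist z w ≤ epskNN k Sn z).card : ℝ)
      ≤ (β : ℝ) * m := by
    have h2 : ∑ z ∈ S, (St.filter fun w => dist z w ≤ epskNN k Sn z).card ≤ β * m := by
      rw [← hm]
      calc ∑ z ∈ S, (St.filter fun w => dist z w ≤ epskNN k Sn z).card
          = ∑ z ∈ S, (St.filter fun w => dist z w ≤ r z).card :=
            Finset.sum_congr rfl fun z hz => by rw [hfilSt z hz]
        _ ≤ β * St.card := hsum1
    exact_mod_cast h2
  have hfinal : α * (Tf.card : ℝ) ≤ (β : ℝ) * (m : ℝ) :=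
    calc α * (Tf.card : ℝ)
        ≤ α * ∑ z ∈ S, ((Sn.filter fun w => dist z w ≤ epskNN k Sn z).card : ℝ) :=
          mul_le_mul_of_nonneg_left hR1 hα0.le
      _ ≤ ∑ z ∈ S, ((St.filter fun w => dist z w ≤ epskNN k Sn z).card : ℝ) := hR2
      _ ≤ (β : ℝ) * (m : ℝ) := hR3
  rw [mul_comm]
  exact hfinal
end
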